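/- arXiv:2404.19501 — 9 statements merged into one kernel-verified Lean document; each statement's English description precedes it below -/
import Mathlib

section
/- (Conjugation Lemma, backward direction) Let q_{XZ} be a harmonium density with parameters (θ_X, θ_Z, Θ_{XZ}). If there exist a vector ρ and scalar χ such that ψ_X(θ_X + Θ_{XZ}·s_Z(z)) = s_Z(z)·ρ + χ for all z ∈ 𝒵, then the marginal q_Z is a member of the exponential family ℳ_Z with natural parameters θ_Z + ρ. -/
open MeasureTheory Matrix

/-- Conjugation Lemma, backward direction: If there exist a
vector `ρ` and scalar `χ` such that `ψX (θX + Θ ⬝ sZ z) = sZ z ⬝ ρ + χ`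
for all `z`, then the marginal `qZ` is a member of the exponential family
`ℳ_Z` with natural parameters `θZ + ρ`, i.e.
`qZ z = exp (sZ z ⬝ (θZ + ρ) − ψZ (θZ + ρ))` μZ-a.e. -/
theorem conjugation_lemma_backward
    {𝒳 𝒵 : Type*} [MeasurableSpace 𝒳] [MeasurableSpace 𝒵]
    (μX : Measure 𝒳) [SigmaFinite μX] (μZ : Measure 𝒵) [SigmaFinite μZ]
    (dX dZ : ℕ) (sX : 𝒳 → (Fin dX → ℝ)) (sZ : 𝒵 → (Fin dZ → ℝ))
    (θX : Fin dX → ℝ) (θZ : Fin dZ → ℝ) (Θ : Matrix (Fin dX) (Fin dZ) ℝ)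
    (ψX : (Fin dX → ℝ) → ℝ)
    (hψX : ∀ η, ψX η = Real.log (∫ x, Real.exp (sX x ⬝ᵥ η) ∂μX))
    (ψZ : (Fin dZ → ℝ) → ℝ)
    (hψZ : ∀ η, ψZ η = Real.log (∫ z, Real.exp (sZ z ⬝ᵥ η) ∂μZ))
    (ψXZ : ℝ)
    (hψXZ : ψXZ = Real.log (∫ z, ∫ x,
      Real.exp (sX x ⬝ᵥ θX + sZ z ⬝ᵥ θZ + sX x ⬝ᵥ Θ.mulVec (sZ z)) ∂μX ∂μZ))
    (q : 𝒳 → 𝒵 → ℝ)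
    (hq : ∀ x z, q x z =
      Real.exp (sX x ⬝ᵥ θX + sZ z ⬝ᵥ θZ + sX x ⬝ᵥ Θ.mulVec (sZ z) - ψXZ))
    (qZ : 𝒵 → ℝ)
    (hqZ : ∀ z, qZ z = ∫ x, q x z ∂μX)
    -- finiteness and positivity of the partition integrals
    (hintX : ∀ z, Integrable (fun x => Real.exp (sX x ⬝ᵥ (θX + Θ.mulVec (sZ z)))) μX)
    (hposX : ∀ z, 0 < ∫ x, Real.exp (sX x ⬝ᵥ (θX + Θ.mulVec (sZ z))) ∂μX)
    (hintZ : ∀ η, Integrable (fun z => Real.exp (sZ z ⬝ᵥ η)) μZ)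
    (hposZ : ∀ η, 0 < ∫ z, Real.exp (sZ z ⬝ᵥ η) ∂μZ)
    -- conjugation equation
    (ρ : Fin dZ → ℝ) (χ : ℝ)
    (hconj : ∀ z, ψX (θX + Θ.mulVec (sZ z)) = sZ z ⬝ᵥ ρ + χ) :
    ∀ᵐ z ∂μZ, qZ z = Real.exp (sZ z ⬝ᵥ (θZ + ρ) - ψZ (θZ + ρ)) := by
  -- inner integral evaluation
  have hIX : ∀ z, (∫ x, Real.exp (sX x ⬝ᵥ (θX + Θ.mulVec (sZ z))) ∂μX)
      = Real.exp (sZ z ⬝ᵥ ρ + χ) := by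
    intro z
    have h1 := hconj z
    rw [hψX] at h1
    have := Real.exp_log (hposX z)
    rw [h1] at this
    linarith [this]
  have hexp : ∀ x z, sX x ⬝ᵥ θX + sZ z ⬝ᵥ θZ + sX x ⬝ᵥ Θ.mulVec (sZ z)
      = sZ z ⬝ᵥ θZ + sX x ⬝ᵥ (θX + Θ.mulVec (sZ z)) := by
    intro x z; rw [dotProduct_add]; ring
  have hinner : ∀ z, (∫ x, Real.exp (sX x ⬝ᵥ θX + sZ z ⬝ᵥ θZ
        + sX x ⬝ᵥ Θ.mulVec (sZ z)) ∂μX)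
      = Real.exp (sZ z ⬝ᵥ θZ) * Real.exp (sZ z ⬝ᵥ ρ + χ) := by
    intro z
    rw [← hIX z, ← integral_const_mul]
    congr 1; funext x
    rw [hexp x z, Real.exp_add]
  -- evaluate ψXZ
  have hψZval : ψXZ = ψZ (θZ + ρ) + χ := by
    rw [hψXZ]
    have : (∫ z, ∫ x, Real.exp (sX x ⬝ᵥ θX + sZ z ⬝ᵥ θZ
        + sX x ⬝ᵥ Θ.mulVec (sZ z)) ∂μX ∂μZ)
        = Real.exp χ * ∫ z, Real.exp (sZ z ⬝ᵥ (θZ + ρ)) ∂μZ := by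
      rw [← integral_const_mul]
      congr 1; funext z
      rw [hinner z, ← Real.exp_add, ← Real.exp_add, dotProduct_add]
      ring_nf
    rw [this, Real.log_mul (Real.exp_ne_zero χ) (ne_of_gt (hposZ (θZ + ρ))),
      Real.log_exp, hψZ]
    ring
  -- pointwise equality
  refine Filter.Eventually.of_forall (fun z => ?_)
  rw [hqZ]
  have : (∫ x, q x z ∂μX)
      = Real.exp (-ψXZ) * ∫ x, Real.exp (sX x ⬝ᵥ θX + sZ z ⬝ᵥ θZ
        + sX x ⬝ᵥ Θ.mulVec (sZ z)) ∂μX := by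
    rw [← integral_const_mul]
    congr 1; funext x
    rw [hq x z, ← Real.exp_add]
    ring_nf
  rw [this, hinner z, ← Real.exp_add, ← Real.exp_add, hψZval, dotProduct_add]
  ring_nf
end

section
/- (Conjugation Lemma, forward direction) Let q_{XZ} be a harmonium density with parameters (θ_X, θ_Z, Θ_{XZ}), where ℳ_Z is minimal (components of s_Z non-constant and linearly independent). If the marginal q_Z belongs to ℳ_Z with parameters θ*_Z, then there exists a scalar χ such that ψ_X(θ_X + Θ_{XZ}·s_Z(z)) = s_Z(z)·(θ*_Z − θ_Z) + χ for all z ∈ 𝒵. -/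
open MeasureTheory Matrix

/-- Conjugation Lemma, forward direction: Let `q` be a
harmonium density with parameters `(θX, θZ, Θ)` where `ℳ_Z` is minimal
(the components of `sZ` together with the constant `1` are linearly
independent as functions on `𝒵`). If the marginal `qZ` belongs to `ℳ_Z`
with parameters `θZ*`, then there exists a scalar `χ` such that
`ψX (θX + Θ ⬝ sZ z) = sZ z ⬝ (θZ* − θZ) + χ` for all `z`. -/
theorem conjugation_lemma_forward
    {𝒳 𝒵 : Type*} [MeasurableSpace 𝒳] [MeasurableSpace 𝒵]
    (μX : Measure 𝒳) [SigmaFinite μX] (μZ : Measure 𝒵) [SigmaFinite μZ]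
    (dX dZ : ℕ) (sX : 𝒳 → (Fin dX → ℝ)) (sZ : 𝒵 → (Fin dZ → ℝ))
    (θX : Fin dX → ℝ) (θZ : Fin dZ → ℝ) (Θ : Matrix (Fin dX) (Fin dZ) ℝ)
    (ψX : (Fin dX → ℝ) → ℝ)
    (hψX : ∀ η, ψX η = Real.log (∫ x, Real.exp (sX x ⬝ᵥ η) ∂μX))
    (ψZ : (Fin dZ → ℝ) → ℝ)
    (hψZ : ∀ η, ψZ η = Real.log (∫ z, Real.exp (sZ z ⬝ᵥ η) ∂μZ))
    (ψXZ : ℝ)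
    (q : 𝒳 → 𝒵 → ℝ)
    (hq : ∀ x z, q x z =
      Real.exp (sX x ⬝ᵥ θX + sZ z ⬝ᵥ θZ + sX x ⬝ᵥ Θ.mulVec (sZ z) - ψXZ))
    (qZ : 𝒵 → ℝ)
    (hqZ : ∀ z, qZ z = ∫ x, q x z ∂μX)
    -- finiteness and positivity of the partition integrals
    (hintX : ∀ z, Integrable (fun x => Real.exp (sX x ⬝ᵥ (θX + Θ.mulVec (sZ z)))) μX)
    (hposX : ∀ z, 0 < ∫ x, Real.exp (sX x ⬝ᵥ (θX + Θ.mulVec (sZ z))) ∂μX)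
    -- minimality of ℳ_Z: components of sZ and the constant 1 are linearly
    -- independent as functions on 𝒵
    (hmin : ∀ (c : Fin dZ → ℝ) (b : ℝ), (∀ z, sZ z ⬝ᵥ c + b = 0) → c = 0 ∧ b = 0)
    -- the marginal belongs to ℳ_Z with parameters θZstar
    (θZstar : Fin dZ → ℝ)
    (hmem : ∀ z, qZ z = Real.exp (sZ z ⬝ᵥ θZstar - ψZ θZstar)) :
    ∃ χ : ℝ, ∀ z, ψX (θX + Θ.mulVec (sZ z)) = sZ z ⬝ᵥ (θZstar - θZ) + χ := by
  refine ⟨ψXZ - ψZ θZstar, fun z => ?_⟩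
  have hsplit : ∀ x, q x z =
      Real.exp (sX x ⬝ᵥ (θX + Θ.mulVec (sZ z))) * Real.exp (sZ z ⬝ᵥ θZ - ψXZ) := by
    intro x
    rw [hq, ← Real.exp_add, dotProduct_add]
    ring_nf
  have hint : qZ z = (∫ x, Real.exp (sX x ⬝ᵥ (θX + Θ.mulVec (sZ z))) ∂μX) *
      Real.exp (sZ z ⬝ᵥ θZ - ψXZ) := by
    rw [hqZ]
    simp_rw [hsplit]
    rw [integral_mul_const]
  have hI := hposX z
  have heq : Real.exp (sZ z ⬝ᵥ θZstar - ψZ θZstar) =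
      (∫ x, Real.exp (sX x ⬝ᵥ (θX + Θ.mulVec (sZ z))) ∂μX) *
      Real.exp (sZ z ⬝ᵥ θZ - ψXZ) := by
    rw [← hint, ← hmem]
  have hlog : sZ z ⬝ᵥ θZstar - ψZ θZstar =
      Real.log (∫ x, Real.exp (sX x ⬝ᵥ (θX + Θ.mulVec (sZ z))) ∂μX) +
      (sZ z ⬝ᵥ θZ - ψXZ) := by
    have := congrArg Real.log heq
    rwa [Real.log_exp, Real.log_mul (ne_of_gt hI) (Real.exp_ne_zero _),
      Real.log_exp] at this
  rw [hψX, dotProduct_sub]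
  linarith
end

section
/- Let q_{XZ} be a conjugated harmonium density with parameters (θ_X, θ_Z, Θ_{XZ}) and conjugation parameters ρ, χ (i.e., ψ_X(θ_X + Θ_{XZ}·s_Z(z)) = s_Z(z)·ρ + χ for all z). Then the joint log-partition function satisfies ψ_{XZ}(θ_X, θ_Z, Θ_{XZ}) = ψ_Z(θ_Z + ρ) + χ. -/
open MeasureTheory Matrix

/-- For a conjugated harmonium density with parameters
`(θX, θZ, Θ)` and conjugation parameters `ρ, χ` (i.e.
`ψX (θX + Θ ⬝ sZ z) = sZ z ⬝ ρ + χ` for all `z`), the joint log-partition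
function satisfies `ψXZ (θX, θZ, Θ) = ψZ (θZ + ρ) + χ`. -/
theorem conjugated_harmonium_log_partition
    {𝒳 𝒵 : Type*} [MeasurableSpace 𝒳] [MeasurableSpace 𝒵]
    (μX : Measure 𝒳) [SigmaFinite μX] (μZ : Measure 𝒵) [SigmaFinite μZ]
    (dX dZ : ℕ) (sX : 𝒳 → (Fin dX → ℝ)) (sZ : 𝒵 → (Fin dZ → ℝ))
    (θX : Fin dX → ℝ) (θZ : Fin dZ → ℝ) (Θ : Matrix (Fin dX) (Fin dZ) ℝ)
    (ψX : (Fin dX → ℝ) → ℝ)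
    (hψX : ∀ η, ψX η = Real.log (∫ x, Real.exp (sX x ⬝ᵥ η) ∂μX))
    (ψZ : (Fin dZ → ℝ) → ℝ)
    (hψZ : ∀ η, ψZ η = Real.log (∫ z, Real.exp (sZ z ⬝ᵥ η) ∂μZ))
    (ψXZ : ℝ)
    (hψXZ : ψXZ = Real.log (∫ z, ∫ x,
      Real.exp (sX x ⬝ᵥ θX + sZ z ⬝ᵥ θZ + sX x ⬝ᵥ Θ.mulVec (sZ z)) ∂μX ∂μZ))
    -- finiteness and positivity of the partition integrals
    (hintX : ∀ z, Integrable (fun x => Real.exp (sX x ⬝ᵥ (θX + Θ.mulVec (sZ z)))) μX)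
    (hposX : ∀ z, 0 < ∫ x, Real.exp (sX x ⬝ᵥ (θX + Θ.mulVec (sZ z))) ∂μX)
    (hintZ : ∀ η, Integrable (fun z => Real.exp (sZ z ⬝ᵥ η)) μZ)
    (hposZ : ∀ η, 0 < ∫ z, Real.exp (sZ z ⬝ᵥ η) ∂μZ)
    -- conjugation
    (ρ : Fin dZ → ℝ) (χ : ℝ)
    (hconj : ∀ z, ψX (θX + Θ.mulVec (sZ z)) = sZ z ⬝ᵥ ρ + χ) :
    ψXZ = ψZ (θZ + ρ) + χ := by
  have h1 : ∀ z, (∫ x, Real.exp (sX x ⬝ᵥ θX + sZ z ⬝ᵥ θZ + sX x ⬝ᵥ Θ.mulVec (sZ z)) ∂μX)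
      = Real.exp (sZ z ⬝ᵥ (θZ + ρ) + χ) := by
    intro z
    have hre : ∀ x, sX x ⬝ᵥ θX + sZ z ⬝ᵥ θZ + sX x ⬝ᵥ Θ.mulVec (sZ z)
        = sZ z ⬝ᵥ θZ + sX x ⬝ᵥ (θX + Θ.mulVec (sZ z)) := by
      intro x; rw [dotProduct_add]; ring
    calc (∫ x, Real.exp (sX x ⬝ᵥ θX + sZ z ⬝ᵥ θZ + sX x ⬝ᵥ Θ.mulVec (sZ z)) ∂μX)
        = ∫ x, Real.exp (sZ z ⬝ᵥ θZ) * Real.exp (sX x ⬝ᵥ (θX + Θ.mulVec (sZ z))) ∂μX := by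
          refine integral_congr_ae (Filter.Eventually.of_forall fun x => ?_)
          dsimp only
          rw [hre x, Real.exp_add]
      _ = Real.exp (sZ z ⬝ᵥ θZ) * ∫ x, Real.exp (sX x ⬝ᵥ (θX + Θ.mulVec (sZ z))) ∂μX := by
          rw [integral_const_mul]
      _ = Real.exp (sZ z ⬝ᵥ θZ) * Real.exp (ψX (θX + Θ.mulVec (sZ z))) := by
          rw [hψX, Real.exp_log (hposX z)]
      _ = Real.exp (sZ z ⬝ᵥ (θZ + ρ) + χ) := by
          rw [hconj z, ← Real.exp_add, dotProduct_add]; ring_nf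
  rw [hψXZ, hψZ]
  have h2 : (∫ z, ∫ x,
      Real.exp (sX x ⬝ᵥ θX + sZ z ⬝ᵥ θZ + sX x ⬝ᵥ Θ.mulVec (sZ z)) ∂μX ∂μZ)
      = Real.exp χ * ∫ z, Real.exp (sZ z ⬝ᵥ (θZ + ρ)) ∂μZ := by
    rw [← integral_const_mul]
    refine integral_congr_ae (Filter.Eventually.of_forall fun z => ?_)
    dsimp only
    rw [h1 z, ← Real.exp_add]; ring_nf
  rw [h2, Real.log_mul (Real.exp_ne_zero χ) (ne_of_gt (hposZ (θZ + ρ))), Real.log_exp]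
  ring
end

section
/- Let q_{XZ} be a conjugated harmonium density with parameters (θ_X, θ_Z, Θ_{XZ}) and conjugation parameters ρ, χ. Then the observable marginal density satisfies log q_X(x) = s_X(x)·θ_X + ψ_Z(θ_Z + s_X(x)·Θ_{XZ}) − ψ_Z(θ_Z + ρ) − χ. -/
open MeasureTheory Matrix

/-- For a conjugated harmonium density with parameters
`(θX, θZ, Θ)` and conjugation parameters `ρ, χ`, the observable marginal
density satisfies
`log qX x = sX x ⬝ θX + ψZ (θZ + sX x ⬝ Θ) − ψZ (θZ + ρ) − χ`. -/
theorem conjugated_harmonium_observable_density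
    {𝒳 𝒵 : Type*} [MeasurableSpace 𝒳] [MeasurableSpace 𝒵]
    (μX : Measure 𝒳) [SigmaFinite μX] (μZ : Measure 𝒵) [SigmaFinite μZ]
    (dX dZ : ℕ) (sX : 𝒳 → (Fin dX → ℝ)) (sZ : 𝒵 → (Fin dZ → ℝ))
    (θX : Fin dX → ℝ) (θZ : Fin dZ → ℝ) (Θ : Matrix (Fin dX) (Fin dZ) ℝ)
    (ψX : (Fin dX → ℝ) → ℝ)
    (hψX : ∀ η, ψX η = Real.log (∫ x, Real.exp (sX x ⬝ᵥ η) ∂μX))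
    (ψZ : (Fin dZ → ℝ) → ℝ)
    (hψZ : ∀ η, ψZ η = Real.log (∫ z, Real.exp (sZ z ⬝ᵥ η) ∂μZ))
    (ψXZ : ℝ)
    (hψXZ : ψXZ = Real.log (∫ z, ∫ x,
      Real.exp (sX x ⬝ᵥ θX + sZ z ⬝ᵥ θZ + sX x ⬝ᵥ Θ.mulVec (sZ z)) ∂μX ∂μZ))
    (q : 𝒳 → 𝒵 → ℝ)
    (hq : ∀ x z, q x z =
      Real.exp (sX x ⬝ᵥ θX + sZ z ⬝ᵥ θZ + sX x ⬝ᵥ Θ.mulVec (sZ z) - ψXZ))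
    (qX : 𝒳 → ℝ)
    (hqX : ∀ x, qX x = ∫ z, q x z ∂μZ)
    -- finiteness and positivity of the partition integrals
    (hintX : ∀ η, Integrable (fun x => Real.exp (sX x ⬝ᵥ η)) μX)
    (hposX : ∀ η, 0 < ∫ x, Real.exp (sX x ⬝ᵥ η) ∂μX)
    (hintZ : ∀ η, Integrable (fun z => Real.exp (sZ z ⬝ᵥ η)) μZ)
    (hposZ : ∀ η, 0 < ∫ z, Real.exp (sZ z ⬝ᵥ η) ∂μZ)
    -- conjugation
    (ρ : Fin dZ → ℝ) (χ : ℝ)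
    (hconj : ∀ z, ψX (θX + Θ.mulVec (sZ z)) = sZ z ⬝ᵥ ρ + χ) :
    ∀ x, Real.log (qX x) =
      sX x ⬝ᵥ θX + ψZ (θZ + Matrix.vecMul (sX x) Θ) - ψZ (θZ + ρ) - χ := by

  intro x
  have hψXZ' : ψXZ = χ + ψZ (θZ + ρ) := by
    rw [hψXZ]
    have h1 : ∀ z, (∫ x, Real.exp (sX x ⬝ᵥ θX + sZ z ⬝ᵥ θZ +
        sX x ⬝ᵥ Θ.mulVec (sZ z)) ∂μX)
        = Real.exp χ * Real.exp (sZ z ⬝ᵥ (θZ + ρ)) := by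
      intro z
      have he : (fun x => Real.exp (sX x ⬝ᵥ θX + sZ z ⬝ᵥ θZ + sX x ⬝ᵥ Θ.mulVec (sZ z)))
          = fun x => Real.exp (sZ z ⬝ᵥ θZ) * Real.exp (sX x ⬝ᵥ (θX + Θ.mulVec (sZ z))) := by
        funext x; rw [← Real.exp_add, dotProduct_add]; ring_nf
      rw [he, integral_const_mul]
      have h2 : ∫ x, Real.exp (sX x ⬝ᵥ (θX + Θ.mulVec (sZ z))) ∂μX
          = Real.exp (sZ z ⬝ᵥ ρ + χ) := by
        rw [← hconj z, hψX, Real.exp_log (hposX _)]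
      rw [h2, ← Real.exp_add, ← Real.exp_add, dotProduct_add]
      ring_nf
    simp_rw [h1, integral_const_mul,
      Real.log_mul (Real.exp_ne_zero _) (ne_of_gt (hposZ _)), Real.log_exp, hψZ]
  have hmarg : qX x = Real.exp (sX x ⬝ᵥ θX - ψXZ) *
      ∫ z, Real.exp (sZ z ⬝ᵥ (θZ + Matrix.vecMul (sX x) Θ)) ∂μZ := by
    rw [hqX, ← integral_const_mul]
    congr 1; funext z
    rw [hq, ← Real.exp_add]
    congr 1
    have h3 : sX x ⬝ᵥ Θ.mulVec (sZ z) = sZ z ⬝ᵥ Matrix.vecMul (sX x) Θ := by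
      rw [dotProduct_mulVec, dotProduct_comm]
    rw [dotProduct_add, h3]; ring
  rw [hmarg, Real.log_mul (Real.exp_ne_zero _) (ne_of_gt (hposZ _)), Real.log_exp,
    hψZ (θZ + Matrix.vecMul (sX x) Θ), hψXZ']
  ring
end

section
/- (Conjugation Theorem, backward direction) Suppose a likelihood function has the form f_{X|Z}(x|z) = exp(s_X(x)·(θ_X + Θ_{XZ}·s_Z(z)) − s_Z(z)·ρ − χ) for some parameters θ_X, Θ_{XZ}, ρ, χ. Then for any prior q_Z in ℳ_Z with natural parameters θ*_Z, the Bayes posterior q_{Z|X=x}(z) ∝ f_{X|Z}(x|z) q_Z(z) is a member of ℳ_Z with natural parameters θ*_Z + s_X(x)·Θ_{XZ} − ρ. -/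
open MeasureTheory Matrix

/-- Conjugation Theorem, backward direction: Suppose the
likelihood has the form
`f x z = exp (sX x ⬝ (θX + Θ ⬝ sZ z) − sZ z ⬝ ρ − χ)`.
Then for any prior `qZ ∈ ℳ_Z` with natural parameters `θZ*`, the Bayes
posterior `q_{Z|X=x}(z) ∝ f x z * qZ z` is a member of `ℳ_Z` with natural
parameters `θZ* + sX x ⬝ Θ − ρ`. -/
theorem conjugation_theorem_backward
    {𝒳 𝒵 : Type*} [MeasurableSpace 𝒳] [MeasurableSpace 𝒵]
    (μZ : Measure 𝒵) [SigmaFinite μZ]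
    (dX dZ : ℕ) (sX : 𝒳 → (Fin dX → ℝ)) (sZ : 𝒵 → (Fin dZ → ℝ))
    (θX : Fin dX → ℝ) (Θ : Matrix (Fin dX) (Fin dZ) ℝ)
    (ρ : Fin dZ → ℝ) (χ : ℝ)
    (f : 𝒳 → 𝒵 → ℝ)
    (hf : ∀ x z, f x z =
      Real.exp (sX x ⬝ᵥ (θX + Θ.mulVec (sZ z)) - sZ z ⬝ᵥ ρ - χ))
    (ψZ : (Fin dZ → ℝ) → ℝ)
    (hψZ : ∀ η, ψZ η = Real.log (∫ z, Real.exp (sZ z ⬝ᵥ η) ∂μZ))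
    (hintZ : ∀ η, Integrable (fun z => Real.exp (sZ z ⬝ᵥ η)) μZ)
    (hposZ : ∀ η, 0 < ∫ z, Real.exp (sZ z ⬝ᵥ η) ∂μZ)
    -- prior in ℳ_Z with parameters θZstar
    (θZstar : Fin dZ → ℝ) (qZ : 𝒵 → ℝ)
    (hqZ : ∀ z, qZ z = Real.exp (sZ z ⬝ᵥ θZstar - ψZ θZstar))
    -- Bayes posterior
    (post : 𝒳 → 𝒵 → ℝ)
    (hpost : ∀ x z, post x z =
      f x z * qZ z / ∫ z', f x z' * qZ z' ∂μZ) :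
    ∀ x z, post x z =
      Real.exp (sZ z ⬝ᵥ (θZstar + Matrix.vecMul (sX x) Θ - ρ)
        - ψZ (θZstar + Matrix.vecMul (sX x) Θ - ρ)) := by
  intro x z
  set η := θZstar + Matrix.vecMul (sX x) Θ - ρ with hη
  set C := sX x ⬝ᵥ θX - χ - ψZ θZstar with hC
  have key : ∀ z, f x z * qZ z = Real.exp C * Real.exp (sZ z ⬝ᵥ η) := by
    intro z
    rw [hf, hqZ, ← Real.exp_add]
    congr 1
    simp only [hη, hC, dotProduct_add, add_dotProduct, sub_dotProduct,
      Matrix.dotProduct_mulVec, dotProduct_comm (sZ z), ← Real.exp_add]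
    ring_nf
  have hint : (∫ z', f x z' * qZ z' ∂μZ)
      = Real.exp C * ∫ z', Real.exp (sZ z' ⬝ᵥ η) ∂μZ := by
    simp_rw [key]
    rw [integral_const_mul]
  rw [hpost, key, hint, mul_div_mul_left _ _ (Real.exp_ne_zero C),
    Real.exp_sub, hψZ, Real.exp_log (hposZ η)]
end

section
/- (Conjugation Theorem, forward direction) Suppose ℳ_X and ℳ_Z are minimal exponential families, f_{X|Z}(·|z) ∈ ℳ_X for each z, and ℳ_Z is a conjugate prior family for f_{X|Z} (i.e., for every prior q_Z ∈ ℳ_Z, the Bayes posterior lies in ℳ_Z). Assume also that there exists a joint density q_{XZ} = f_{X|Z} · q_Z for some q_Z ∈ ℳ_Z. Then f_{X|Z} has the form f_{X|Z}(x|z) = exp(s_X(x)·(θ_X + Θ_{XZ}·s_Z(z)) − s_Z(z)·ρ − χ) for some parameters θ_X, Θ_{XZ}, ρ, χ. -/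
open MeasureTheory Matrix

/-!
Conjugacy at the prior with natural parameter `0` says that, for each `x`, the log-likelihood
`z ↦ sX x ⬝ᵥ θ z - ψX (θ z)` is an affine function of `sZ z`. This is the pairing of the lifted
statistic `(1, sX x)` with `(-ψX (θ z), θ z)`; by minimality the lifted statistics span the whole
space, so every coordinate of `(-ψX (θ z), θ z)` is affine in `sZ z`, which is the claimed form.
-/

section AffineFunctions

variable {Z ι K : Type*} [Fintype ι] [CommSemiring K]

def affineFunctions (s : Z → ι → K) : Submodule K (Z → K) where
  carrier := {g | ∃ (c : ι → K) (b : K), ∀ z, g z = s z ⬝ᵥ c + b}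
  add_mem' := by
    rintro g h ⟨c, b, hg⟩ ⟨c', b', hh⟩
    exact ⟨c + c', b + b', fun z => by simp only [Pi.add_apply, hg, hh, dotProduct_add]; ring⟩
  zero_mem' := ⟨0, 0, fun z => by simp⟩
  smul_mem' := by
    rintro a g ⟨c, b, hg⟩
    exact ⟨a • c, a * b, fun z => by simp only [Pi.smul_apply, smul_eq_mul, hg, dotProduct_smul]; ring⟩

@[simp]
theorem mem_affineFunctions {s : Z → ι → K} {g : Z → K} :
    g ∈ affineFunctions s ↔ ∃ (c : ι → K) (b : K), ∀ z, g z = s z ⬝ᵥ c + b :=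
  Iff.rfl

theorem exists_eq_add_mulVec_of_forall_apply_mem {κ : Type*} {s : Z → ι → K} {F : Z → κ → K}
    (hF : ∀ i, (fun z => F z i) ∈ affineFunctions s) :
    ∃ (b : κ → K) (M : Matrix κ ι K), ∀ z, F z = b + M *ᵥ s z := by
  choose c b hcb using hF
  exact ⟨b, Matrix.of c, fun z => funext fun i => by
    simp only [hcb i z, Pi.add_apply, mulVec, of_apply, dotProduct_comm (s z), add_comm]⟩

theorem dotProduct_mem_of_span_eq_top {A : Submodule K (Z → K)} {S : Set (ι → K)}
    (hS : Submodule.span K S = ⊤) {F : Z → ι → K}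
    (hF : ∀ v ∈ S, (fun z => v ⬝ᵥ F z) ∈ A) (w : ι → K) : (fun z => w ⬝ᵥ F z) ∈ A := by
  let L : (ι → K) →ₗ[K] Z → K :=
    { toFun := fun w z => w ⬝ᵥ F z
      map_add' := fun u v => funext fun z => add_dotProduct u v (F z)
      map_smul' := fun a v => funext fun z => smul_dotProduct a v (F z) }
  have hSL : S ⊆ A.comap L := hF
  exact Submodule.span_le.2 hSL (hS ▸ Submodule.mem_top : w ∈ Submodule.span K S)

end AffineFunctions

theorem span_range_vecCons_one_eq_top {X K : Type*} [Field K] {n : ℕ} (s : X → Fin n → K)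
    (hmin : ∀ (c : Fin n → K) (b : K), (∀ x, s x ⬝ᵥ c + b = 0) → c = 0 ∧ b = 0) :
    Submodule.span K (Set.range fun x => vecCons 1 (s x)) = ⊤ := by
  by_contra hne
  obtain ⟨φ, hφ0, hle⟩ := Submodule.exists_le_ker_of_lt_top _ (lt_top_iff_ne_top.2 hne)
  set w : Fin (n + 1) → K := fun i => φ fun j => if i = j then 1 else 0
  have hφ : ∀ v, φ v = w ⬝ᵥ v := fun v => by
    simp only [LinearMap.pi_apply_eq_sum_univ φ v, dotProduct, smul_eq_mul, mul_comm, w]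
  have hw : w = vecCons (w 0) (vecTail w) := (Fin.cons_self_tail w).symm
  obtain ⟨hc, hb⟩ := hmin (vecTail w) (w 0) fun x => by
    have hx := hle (Submodule.subset_span ⟨x, rfl⟩)
    rwa [LinearMap.mem_ker, hφ, hw, cons_dotProduct_cons, mul_one, dotProduct_comm, add_comm] at hx
  exact hφ0 (LinearMap.ext fun v => by rw [hφ, hw, hb, hc]; simp)

theorem eq_add_log_of_exp_div_eq_exp {u v I : ℝ} (h : Real.exp u / I = Real.exp v) :
    u = v + Real.log I := by
  have hI : 0 < I := by
    have := h ▸ Real.exp_pos v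
    exact ((div_pos_iff.1 this).resolve_right fun h' => (Real.exp_pos u).not_gt h'.1).2
  rw [← Real.exp_eq_exp, Real.exp_add, Real.exp_log hI, ← h, div_mul_cancel₀ _ hI.ne']

theorem conjugation_theorem_forward_general
    {𝒳 𝒵 : Type*} [MeasurableSpace 𝒵]
    (μZ : Measure 𝒵)
    (dX dZ : ℕ) (sX : 𝒳 → (Fin dX → ℝ)) (sZ : 𝒵 → (Fin dZ → ℝ))
    (ψX : (Fin dX → ℝ) → ℝ)
    (ψZ : (Fin dZ → ℝ) → ℝ)
    -- minimality: components of the sufficient statistics together with the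
    -- constant 1 are linearly independent as functions
    (hminX : ∀ (c : Fin dX → ℝ) (b : ℝ), (∀ x, sX x ⬝ᵥ c + b = 0) → c = 0 ∧ b = 0)
    -- the likelihood: f (·|z) ∈ ℳ_X with natural parameters θfun z
    (f : 𝒳 → 𝒵 → ℝ) (θfun : 𝒵 → (Fin dX → ℝ))
    (hf : ∀ x z, f x z = Real.exp (sX x ⬝ᵥ θfun z - ψX (θfun z)))
    -- ℳ_Z is a conjugate prior family for f: for every prior in ℳ_Z, the
    -- Bayes posterior lies in ℳ_Z
    (hconjprior : ∀ (θZstar : Fin dZ → ℝ) (x : 𝒳), ∃ η : Fin dZ → ℝ,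
      ∀ z, f x z * Real.exp (sZ z ⬝ᵥ θZstar - ψZ θZstar)
          / (∫ z', f x z' * Real.exp (sZ z' ⬝ᵥ θZstar - ψZ θZstar) ∂μZ)
        = Real.exp (sZ z ⬝ᵥ η - ψZ η)) :
    ∃ (θX : Fin dX → ℝ) (Θ : Matrix (Fin dX) (Fin dZ) ℝ)
      (ρ : Fin dZ → ℝ) (χ : ℝ),
      ∀ x z, f x z =
        Real.exp (sX x ⬝ᵥ (θX + Θ.mulVec (sZ z)) - sZ z ⬝ᵥ ρ - χ) := by
  have hloglik : ∀ x, (fun z => sX x ⬝ᵥ θfun z - ψX (θfun z)) ∈ affineFunctions sZ := by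
    intro x
    obtain ⟨η, hη⟩ := hconjprior 0 x
    set I := ∫ z', f x z' * Real.exp (sZ z' ⬝ᵥ 0 - ψZ 0) ∂μZ
    refine ⟨η, ψZ 0 - ψZ η + Real.log I, fun z => ?_⟩
    have := eq_add_log_of_exp_div_eq_exp (by simpa only [hf, ← Real.exp_add] using hη z)
    simp only [dotProduct_zero] at this
    linarith
  let F z := vecCons (-ψX (θfun z)) (θfun z)
  have hF : ∀ w, (fun z => w ⬝ᵥ F z) ∈ affineFunctions sZ :=
    dotProduct_mem_of_span_eq_top (span_range_vecCons_one_eq_top sX hminX) <| by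
      rintro _ ⟨x, rfl⟩
      convert hloglik x using 2 with z
      simp only [F, cons_dotProduct_cons]
      ring
  obtain ⟨θX, Θ, hθ⟩ := exists_eq_add_mulVec_of_forall_apply_mem fun (i : Fin dX) => by
    simpa [F] using hF (Pi.single i.succ 1)
  obtain ⟨ρ, χ, hψ⟩ := by simpa [F] using hF (-Pi.single 0 1)
  refine ⟨θX, Θ, ρ, χ, fun x z => ?_⟩
  rw [hf, hψ, hθ]
  congr 1
  ring

/-- Conjugation Theorem, forward direction: Suppose `ℳ_X` and
`ℳ_Z` are minimal exponential families, `f (·|z) ∈ ℳ_X` for each `z` (with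
natural parameters `θfun z`), and `ℳ_Z` is a conjugate prior family for `f`
(for every prior in `ℳ_Z` the Bayes posterior lies in `ℳ_Z`).  Assume also
that a joint density `f · qZ` exists for some prior `qZ ∈ ℳ_Z`.  Then `f`
has the form
`f x z = exp (sX x ⬝ (θX + Θ ⬝ sZ z) − sZ z ⬝ ρ − χ)`
for some parameters `θX, Θ, ρ, χ`. -/
theorem conjugation_theorem_forward
    {𝒳 𝒵 : Type*} [MeasurableSpace 𝒳] [MeasurableSpace 𝒵]
    (μX : Measure 𝒳) [SigmaFinite μX] (μZ : Measure 𝒵) [SigmaFinite μZ]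
    (dX dZ : ℕ) (sX : 𝒳 → (Fin dX → ℝ)) (sZ : 𝒵 → (Fin dZ → ℝ))
    (ψX : (Fin dX → ℝ) → ℝ)
    (hψX : ∀ η, ψX η = Real.log (∫ x, Real.exp (sX x ⬝ᵥ η) ∂μX))
    (ψZ : (Fin dZ → ℝ) → ℝ)
    (hψZ : ∀ η, ψZ η = Real.log (∫ z, Real.exp (sZ z ⬝ᵥ η) ∂μZ))
    (hintX : ∀ η, Integrable (fun x => Real.exp (sX x ⬝ᵥ η)) μX)
    (hposX : ∀ η, 0 < ∫ x, Real.exp (sX x ⬝ᵥ η) ∂μX)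
    (hintZ : ∀ η, Integrable (fun z => Real.exp (sZ z ⬝ᵥ η)) μZ)
    (hposZ : ∀ η, 0 < ∫ z, Real.exp (sZ z ⬝ᵥ η) ∂μZ)
    -- minimality: components of the sufficient statistics together with the
    -- constant 1 are linearly independent as functions
    (hminX : ∀ (c : Fin dX → ℝ) (b : ℝ), (∀ x, sX x ⬝ᵥ c + b = 0) → c = 0 ∧ b = 0)
    (hminZ : ∀ (c : Fin dZ → ℝ) (b : ℝ), (∀ z, sZ z ⬝ᵥ c + b = 0) → c = 0 ∧ b = 0)
    -- the likelihood: f (·|z) ∈ ℳ_X with natural parameters θfun z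
    (f : 𝒳 → 𝒵 → ℝ) (θfun : 𝒵 → (Fin dX → ℝ))
    (hf : ∀ x z, f x z = Real.exp (sX x ⬝ᵥ θfun z - ψX (θfun z)))
    -- existence of a joint density f · qZ for some prior qZ ∈ ℳ_Z
    (θZ0 : Fin dZ → ℝ)
    (hjoint : Integrable (fun p : 𝒳 × 𝒵 =>
      f p.1 p.2 * Real.exp (sZ p.2 ⬝ᵥ θZ0 - ψZ θZ0)) (μX.prod μZ))
    -- ℳ_Z is a conjugate prior family for f: for every prior in ℳ_Z, the
    -- Bayes posterior lies in ℳ_Z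
    (hconjprior : ∀ (θZstar : Fin dZ → ℝ) (x : 𝒳), ∃ η : Fin dZ → ℝ,
      ∀ z, f x z * Real.exp (sZ z ⬝ᵥ θZstar - ψZ θZstar)
          / (∫ z', f x z' * Real.exp (sZ z' ⬝ᵥ θZstar - ψZ θZstar) ∂μZ)
        = Real.exp (sZ z ⬝ᵥ η - ψZ η)) :
    ∃ (θX : Fin dX → ℝ) (Θ : Matrix (Fin dX) (Fin dZ) ℝ)
      (ρ : Fin dZ → ℝ) (χ : ℝ),
      ∀ x z, f x z =
        Real.exp (sX x ⬝ᵥ (θX + Θ.mulVec (sZ z)) - sZ z ⬝ᵥ ρ - χ) :=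
  conjugation_theorem_forward_general μZ dX dZ sX sZ ψX ψZ hminX f θfun hf hconjprior
end

section
/- (Mixture models are conjugated) Let ℳ_K be the categorical exponential family on {0,…,d_K} with one-hot sufficient statistic (s_K(0) = 0, s_{K,i}(k) = δ_{ik} for k > 0), and let ℋ_{XK} be the harmonium defined by an exponential family ℳ_X and ℳ_K. Then every q_{XK} ∈ ℋ_{XK} with parameters (θ_X, θ_K, Θ_{XK}) satisfies the conjugation equation ψ_X(θ_X + Θ_{XK}·s_K(k)) = s_K(k)·ρ + χ for all k, where ρ_i = ψ_X(θ_X + θ_{XK,i}) − ψ_X(θ_X) (θ_{XK,i} the i-th column of Θ_{XK}) and χ = ψ_X(θ_X). -/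
open MeasureTheory Matrix

/-- Mixture models are conjugated: Let `ℳ_K` be the categorical
exponential family on `{0,…,dK}` with one-hot sufficient statistic
(`sK 0 = 0`, `(sK k) i = δ_{i,k}` for `k > 0`), and let `ℋ_{XK}` be the
harmonium defined by an exponential family `ℳ_X` and `ℳ_K`.  Then every
density with parameters `(θX, θK, Θ)` satisfies the conjugation equation
`ψX (θX + Θ ⬝ sK k) = sK k ⬝ ρ + χ` for all `k`, where
`ρ i = ψX (θX + Θᵢ) − ψX θX` (`Θᵢ` the `i`-th column of `Θ`) and
`χ = ψX θX`. -/
theorem mixture_model_conjugated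
    {𝒳 : Type*} [MeasurableSpace 𝒳] (μX : Measure 𝒳) [SigmaFinite μX]
    (dX dK : ℕ) (sX : 𝒳 → (Fin dX → ℝ))
    (ψX : (Fin dX → ℝ) → ℝ)
    (hψX : ∀ η, ψX η = Real.log (∫ x, Real.exp (sX x ⬝ᵥ η) ∂μX))
    -- one-hot sufficient statistic of the categorical family on {0,…,dK}
    (sK : Fin (dK + 1) → (Fin dK → ℝ))
    (hsK : ∀ (k : Fin (dK + 1)) (i : Fin dK),
      sK k i = if (k : ℕ) = (i : ℕ) + 1 then 1 else 0)
    (θX : Fin dX → ℝ) (θK : Fin dK → ℝ) (Θ : Matrix (Fin dX) (Fin dK) ℝ)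
    (ρ : Fin dK → ℝ) (χ : ℝ)
    (hρ : ∀ i, ρ i = ψX (θX + fun j => Θ j i) - ψX θX)
    (hχ : χ = ψX θX) :
    ∀ k : Fin (dK + 1), ψX (θX + Θ.mulVec (sK k)) = sK k ⬝ᵥ ρ + χ := by
  intro k
  induction k using Fin.cases with
  | zero =>
      have h0 : sK 0 = 0 := by
        funext i; simp [hsK]
      simp [h0, Matrix.mulVec, dotProduct, hχ]
  | succ i =>
      have h1 : sK i.succ = fun j => if j = i then 1 else 0 := by
        funext j
        rw [hsK]
        simp [Fin.val_succ, Fin.ext_iff, eq_comm]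
      have hmv : Θ.mulVec (sK i.succ) = fun j => Θ j i := by
        funext j
        simp [h1, Matrix.mulVec, dotProduct, mul_ite]
      have hdot : sK i.succ ⬝ᵥ ρ = ρ i := by
        simp [h1, dotProduct, ite_mul]
      rw [hmv, hdot, hρ, hχ]
      ring
end

section
/- (Linear Gaussian conjugation) Let ℳ_X be the n-dimensional multivariate normal family with natural parameterization (θ^m_X, Θ^σ_X) (precision-weighted mean and negative-half precision matrix, Θ^σ_X negative definite), and let ℳ_Z have sufficient statistic s_Z(z) = (z, tril(z⊗z)). If the interaction matrix couples only the first-order statistics, i.e., Θ_{XZ}·s_Z(z) = (Θ^m_{XZ}·z, 0), then the conjugation equation ψ_X(θ^m_X + Θ^m_{XZ}·z, Θ^σ_X) = z·ρ^m + z·P^σ·z + χ holds for all z, with χ = −¼ θ^m_X·(Θ^σ_X)⁻¹·θ^m_X − ½ log|−2Θ^σ_X|, ρ^m = −½ (Θ^m_{XZ})ᵀ·(Θ^σ_X)⁻¹·θ^m_X, and P^σ = −¼ (Θ^m_{XZ})ᵀ·(Θ^σ_X)⁻¹·Θ^m_{XZ}. -/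
open Matrix

/-- Linear Gaussian conjugation: Let `ℳ_X` be the
`n`-dimensional multivariate normal family with natural parameters
`(θm, Θσ)` (precision-weighted mean and negative-half precision, `Θσ`
symmetric negative definite), with log-partition function
`ψX (tm, Tσ) = −¼ tm ⬝ Tσ⁻¹ ⬝ tm − ½ log |−2Tσ|`.  If the interaction
couples only the first-order statistics (`Θ ⬝ sZ z = (Θm ⬝ z, 0)`), then
the conjugation equation
`ψX (θm + Θm ⬝ z, Θσ) = z ⬝ ρm + z ⬝ Pσ ⬝ z + χ` holds for all `z`, with
`χ = −¼ θm ⬝ Θσ⁻¹ ⬝ θm − ½ log |−2Θσ|`,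
`ρm = −½ Θmᵀ ⬝ Θσ⁻¹ ⬝ θm`, and `Pσ = −¼ Θmᵀ ⬝ Θσ⁻¹ ⬝ Θm`. -/
theorem linear_gaussian_conjugation
    (n m : ℕ)
    (θm : Fin n → ℝ) (Θσ : Matrix (Fin n) (Fin n) ℝ)
    (hsymm : Θσ.IsSymm) (hnegdef : (-Θσ).PosDef)
    (Θm : Matrix (Fin n) (Fin m) ℝ)
    -- the multivariate normal log-partition function
    (ψX : (Fin n → ℝ) → Matrix (Fin n) (Fin n) ℝ → ℝ)
    (hψX : ∀ (tm : Fin n → ℝ) (Tσ : Matrix (Fin n) (Fin n) ℝ),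
      ψX tm Tσ = -(1/4 : ℝ) * (tm ⬝ᵥ Tσ⁻¹.mulVec tm)
        - (1/2 : ℝ) * Real.log (((-2 : ℝ) • Tσ).det))
    (χ : ℝ) (ρm : Fin m → ℝ) (Pσ : Matrix (Fin m) (Fin m) ℝ)
    (hχ : χ = -(1/4 : ℝ) * (θm ⬝ᵥ Θσ⁻¹.mulVec θm)
      - (1/2 : ℝ) * Real.log (((-2 : ℝ) • Θσ).det))
    (hρm : ρm = (-(1/2 : ℝ)) • Θmᵀ.mulVec (Θσ⁻¹.mulVec θm))
    (hPσ : Pσ = (-(1/4 : ℝ)) • (Θmᵀ * Θσ⁻¹ * Θm)) :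
    ∀ z : Fin m → ℝ,
      ψX (θm + Θm.mulVec z) Θσ = z ⬝ᵥ ρm + z ⬝ᵥ Pσ.mulVec z + χ := by
  intro z
  have hA : Θσ⁻¹ᵀ = Θσ⁻¹ := by
    rw [Matrix.transpose_nonsing_inv, hsymm.eq]
  set u := Θm.mulVec z with hu
  have h1 : θm ⬝ᵥ Θσ⁻¹.mulVec u = u ⬝ᵥ Θσ⁻¹.mulVec θm := by
    rw [Matrix.dotProduct_mulVec, ← Matrix.mulVec_transpose, hA,
      dotProduct_comm]
  have h2 : z ⬝ᵥ Θmᵀ.mulVec (Θσ⁻¹.mulVec θm) = u ⬝ᵥ Θσ⁻¹.mulVec θm := by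
    rw [Matrix.dotProduct_mulVec, ← Matrix.mulVec_transpose,
      Matrix.transpose_transpose, hu]
  have h3 : z ⬝ᵥ (Θmᵀ * Θσ⁻¹ * Θm).mulVec z = u ⬝ᵥ Θσ⁻¹.mulVec u := by
    rw [← Matrix.mulVec_mulVec, ← Matrix.mulVec_mulVec,
      Matrix.dotProduct_mulVec, ← Matrix.mulVec_transpose,
      Matrix.transpose_transpose, hu]
  rw [hψX, hχ, hρm, hPσ]
  simp only [Matrix.smul_mulVec, dotProduct_smul,
    Matrix.mulVec_add, dotProduct_add, add_dotProduct,
    smul_eq_mul]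
  rw [h2, h3] at *
  rw [h1]
  ring
end

section
/- (Cross-entropy gradient for harmoniums) Let q_{XZ} be a harmonium density with natural parameters (θ_X, θ_Z, Θ_{XZ}) and differentiable joint log-partition ψ_{XZ}. Define the pointwise cross-entropy L(x, θ) = −log q_X(x) where q_X is the observable marginal. Then ∂_{θ_X} L(x,·) = η_X − s_X(x), ∂_{θ_Z} L(x,·) = η_Z − E_Q[s_Z(Z) | X = x], and ∂_{Θ_{XZ}} L(x,·) = H_{XZ} − s_X(x) ⊗ E_Q[s_Z(Z) | X = x], where (η_X, η_Z, H_{XZ}) = ∇ψ_{XZ}(θ_X, θ_Z, Θ_{XZ}) are the joint mean parameters. -/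
open Matrix

noncomputable def dotCLM {n : ℕ} (c : Fin n → ℝ) : (Fin n → ℝ) →L[ℝ] ℝ :=
  LinearMap.toContinuousLinearMap
    { toFun := fun v => c ⬝ᵥ v
      map_add' := by intro a b; simp [dotProduct_add]
      map_smul' := by intro r a; simp [dotProduct_smul] }

@[simp] lemma dotCLM_apply {n : ℕ} (c v : Fin n → ℝ) : dotCLM c v = c ⬝ᵥ v := rfl

lemma dotCLM_hasFDerivAt {n : ℕ} (c p : Fin n → ℝ) :
    HasFDerivAt (fun v => c ⬝ᵥ v) (dotCLM c) p := (dotCLM c).hasFDerivAt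

lemma clm_apply_eq_sum {n : ℕ} (f : (Fin n → ℝ) →L[ℝ] ℝ) (v : Fin n → ℝ) :
    f v = ∑ j, v j * f (Pi.single j 1) := by
  have hv : v = ∑ j, v j • (Pi.single j 1 : Fin n → ℝ) := by
    funext i
    simp [Pi.single_apply, Finset.sum_apply]
  conv_lhs => rw [hv]
  rw [map_sum]
  simp [smul_eq_mul]

noncomputable def mulCLM {m n : ℕ} (c : Fin m → ℝ) :
    (Fin m → Fin n → ℝ) →L[ℝ] (Fin n → ℝ) :=
  LinearMap.toContinuousLinearMap
    { toFun := fun M => Matrix.vecMul c (Matrix.of M)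
      map_add' := by intro a b; funext j; simp [Matrix.vecMul, dotProduct, mul_add, Finset.sum_add_distrib]
      map_smul' := by intro r a; funext j; simp [Matrix.vecMul, dotProduct, Finset.mul_sum]; ring_nf; simp [mul_comm, mul_left_comm] }

@[simp] lemma mulCLM_apply {m n : ℕ} (c : Fin m → ℝ) (M : Fin m → Fin n → ℝ) :
    mulCLM c M = Matrix.vecMul c (Matrix.of M) := rfl

set_option maxHeartbeats 1000000 in

/-- Cross-entropy gradient for harmoniums: For a harmonium
density with natural parameters `(θX, θZ, Θ)`, differentiable joint
log-partition `ψXZ` with joint mean parameters `(ηX, ηZ, H) = ∇ψXZ`, and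
pointwise cross-entropy
`L x (tX, tZ, M) = −log qX x = −(sX x ⬝ tX + ψZ (tZ + sX x ⬝ M) − ψXZ (tX, tZ, M))`,
the partial gradients are
`∂_{θX} L = ηX − sX x`, `∂_{θZ} L = ηZ − E[sZ Z | X = x]`, and
`∂_{Θ} L = H − sX x ⊗ E[sZ Z | X = x]`, where
`E[sZ Z | X = x] = τZ (θZ + sX x ⬝ Θ)` and `τZ = ∇ψZ`.
(The interaction matrix is represented as a function `Fin dX → Fin dZ → ℝ`
so that the standard normed space structure applies.) -/
theorem harmonium_cross_entropy_gradient
    {𝒳 : Type*} (dX dZ : ℕ) (sX : 𝒳 → (Fin dX → ℝ)) (x : 𝒳)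
    (ψZ : (Fin dZ → ℝ) → ℝ) (hψZdiff : Differentiable ℝ ψZ)
    (ψXZ : (Fin dX → ℝ) → (Fin dZ → ℝ) → (Fin dX → Fin dZ → ℝ) → ℝ)
    (θX : Fin dX → ℝ) (θZ : Fin dZ → ℝ) (Θ : Fin dX → Fin dZ → ℝ)
    -- the joint mean parameters (ηX, ηZ, H) = ∇ψXZ (θX, θZ, Θ)
    (ηX : Fin dX → ℝ) (ηZ : Fin dZ → ℝ) (H : Fin dX → Fin dZ → ℝ)
    (hdX : DifferentiableAt ℝ (fun t => ψXZ t θZ Θ) θX)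
    (hηX : ∀ v, fderiv ℝ (fun t => ψXZ t θZ Θ) θX v = ηX ⬝ᵥ v)
    (hdZ : DifferentiableAt ℝ (fun t => ψXZ θX t Θ) θZ)
    (hηZ : ∀ v, fderiv ℝ (fun t => ψXZ θX t Θ) θZ v = ηZ ⬝ᵥ v)
    (hdM : DifferentiableAt ℝ (fun M => ψXZ θX θZ M) Θ)
    (hH : ∀ V : Fin dX → Fin dZ → ℝ,
      fderiv ℝ (fun M => ψXZ θX θZ M) Θ V = ∑ i, ∑ j, H i j * V i j)
    -- the conditional mean E[sZ Z | X = x] = τZ (θZ + sX x ⬝ Θ) with τZ = ∇ψZ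
    (condMean : Fin dZ → ℝ)
    (hcondMean : ∀ j, condMean j =
      fderiv ℝ ψZ (θZ + Matrix.vecMul (sX x) (Matrix.of Θ)) (Pi.single j 1))
    -- the pointwise cross-entropy L = −log qX x as a function of the parameters
    (L : (Fin dX → ℝ) → (Fin dZ → ℝ) → (Fin dX → Fin dZ → ℝ) → ℝ)
    (hLdef : ∀ tX tZ M, L tX tZ M =
      -((sX x ⬝ᵥ tX) + ψZ (tZ + Matrix.vecMul (sX x) (Matrix.of M)) - ψXZ tX tZ M)) :
    (∀ v, fderiv ℝ (fun t => L t θZ Θ) θX v = (ηX - sX x) ⬝ᵥ v)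
    ∧ (∀ v, fderiv ℝ (fun t => L θX t Θ) θZ v = (ηZ - condMean) ⬝ᵥ v)
    ∧ (∀ V : Fin dX → Fin dZ → ℝ,
        fderiv ℝ (fun M => L θX θZ M) Θ V
          = ∑ i, ∑ j, (H i j - sX x i * condMean j) * V i j) := by
  set pt := θZ + Matrix.vecMul (sX x) (Matrix.of Θ) with hpt
  have hψZpt : ∀ v, fderiv ℝ ψZ pt v = ∑ j, v j * condMean j := by
    intro v
    rw [clm_apply_eq_sum (fderiv ℝ ψZ pt) v]
    exact Finset.sum_congr rfl fun j _ => by rw [hcondMean j]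
  refine ⟨?_, ?_, ?_⟩
  · -- θX part
    intro v
    have h1 : HasFDerivAt (fun t => L t θZ Θ)
        (-(dotCLM (sX x) - fderiv ℝ (fun t => ψXZ t θZ Θ) θX)) θX := by
      have : (fun t => L t θZ Θ) =
          fun t => -((sX x ⬝ᵥ t) + ψZ pt - ψXZ t θZ Θ) := funext fun t => hLdef t θZ Θ
      rw [this]
      exact (((dotCLM_hasFDerivAt (sX x) θX).add_const _).sub hdX.hasFDerivAt).neg
    rw [h1.fderiv]
    simp [hηX, sub_dotProduct]
  · -- θZ part
    intro v
    have hinner : HasFDerivAt (fun t : Fin dZ → ℝ => t + Matrix.vecMul (sX x) (Matrix.of Θ))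
        (ContinuousLinearMap.id ℝ (Fin dZ → ℝ)) θZ := (hasFDerivAt_id θZ).add_const _
    have hcomp : HasFDerivAt (fun t => ψZ (t + Matrix.vecMul (sX x) (Matrix.of Θ)))
        ((fderiv ℝ ψZ pt).comp (ContinuousLinearMap.id ℝ (Fin dZ → ℝ))) θZ :=
      (hψZdiff pt).hasFDerivAt.comp θZ hinner
    have h2 : HasFDerivAt (fun t => L θX t Θ)
        (-((fderiv ℝ ψZ pt).comp (ContinuousLinearMap.id ℝ (Fin dZ → ℝ))
            - fderiv ℝ (fun t => ψXZ θX t Θ) θZ)) θZ := by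
      have : (fun t => L θX t Θ) =
          fun t => -((sX x ⬝ᵥ θX) + ψZ (t + Matrix.vecMul (sX x) (Matrix.of Θ)) - ψXZ θX t Θ) :=
        funext fun t => hLdef θX t Θ
      rw [this]
      exact ((hcomp.const_add _).sub hdZ.hasFDerivAt).neg
    rw [h2.fderiv]
    simp only [ContinuousLinearMap.neg_apply, ContinuousLinearMap.sub_apply,
      ContinuousLinearMap.coe_comp', Function.comp_apply, ContinuousLinearMap.coe_id', id_eq,
      hψZpt, hηZ, sub_dotProduct]
    simp [dotProduct, mul_comm]
  · -- Θ part
    intro V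
    have hinner : HasFDerivAt (fun M : Fin dX → Fin dZ → ℝ => θZ + Matrix.vecMul (sX x) (Matrix.of M))
        (mulCLM (sX x)) Θ := ((mulCLM (sX x)).hasFDerivAt).const_add θZ
    have hcomp : HasFDerivAt (fun M : Fin dX → Fin dZ → ℝ => ψZ (θZ + Matrix.vecMul (sX x) (Matrix.of M)))
        ((fderiv ℝ ψZ pt).comp (mulCLM (sX x))) Θ :=
      (hψZdiff pt).hasFDerivAt.comp Θ hinner
    have h3 : HasFDerivAt (fun M => L θX θZ M)
        (-((fderiv ℝ ψZ pt).comp (mulCLM (sX x)) - fderiv ℝ (fun M => ψXZ θX θZ M) Θ)) Θ := by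
      have : (fun M => L θX θZ M) =
          fun M => -((sX x ⬝ᵥ θX) + ψZ (θZ + Matrix.vecMul (sX x) (Matrix.of M)) - ψXZ θX θZ M) :=
        funext fun M => hLdef θX θZ M
      rw [this]
      exact ((hcomp.const_add _).sub hdM.hasFDerivAt).neg
    rw [h3.fderiv]
    simp only [ContinuousLinearMap.neg_apply, ContinuousLinearMap.sub_apply,
      ContinuousLinearMap.coe_comp', Function.comp_apply, mulCLM_apply, hψZpt, hH]
    rw [neg_sub]
    simp only [sub_mul, Finset.sum_sub_distrib]
    congr 1
    rw [Finset.sum_comm]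
    refine Finset.sum_congr rfl fun j _ => ?_
    simp only [Matrix.vecMul, dotProduct, Matrix.of_apply, Finset.sum_mul, Finset.mul_sum]
    exact Finset.sum_congr rfl fun i _ => by ring
end
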